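/- Let H be a finite dimensional Hopf algebra. R_{(α,β),(γ,δ)} = Σᵢ (ε ⋈ β⁻¹(eᵢ)) ⊗ (eⁱ ⋈ 1) satisfies (Δ_{(α,β),(γ,δ)} ⊗ id)(R_{(α,β)*(γ,δ),(μ,ν)}) = ((id ⊗ ξ_{(γ,δ)⁻¹})(R_{(α,β),(γ,δ)*(μ,ν)*(γ,δ)⁻¹}))₁₃ (R_{(γ,δ),(μ,ν)})₂₃. -/

import Mathlib

open TensorProduct LinearMap

noncomputable section

namespace DCP

variable (K : Type) {H : Type} [Field K] [Ring H] [HopfAlgebra K H]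

/-- A Hopf algebra automorphism: a linear equivalence that is an algebra morphism and a
coalgebra morphism. -/
def IsHopfAut (f : H ≃ₗ[K] H) : Prop :=
  (∀ x y : H, f (x * y) = f x * f y) ∧ f 1 = 1 ∧
    (Coalgebra.comul ∘ₗ f.toLinearMap
      = TensorProduct.map f.toLinearMap f.toLinearMap ∘ₗ Coalgebra.comul) ∧
    (Coalgebra.counit ∘ₗ f.toLinearMap = (Coalgebra.counit : H →ₗ[K] K))

/-- The convolution product on the dual of `H`, as a bilinear map. -/
def convMul : Module.Dual K H →ₗ[K] Module.Dual K H →ₗ[K] Module.Dual K H :=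
  (TensorProduct.mapBilinear (RingHom.id K) H H K K).compr₂
    ((LinearMap.lcomp K K (Coalgebra.comul (R := K) (A := H))) ∘ₗ
      (LinearMap.llcomp K (H ⊗[K] H) (K ⊗[K] K) K (TensorProduct.lid K K).toLinearMap))

@[simp] lemma convMul_apply (p q : Module.Dual K H) (x : H) :
    convMul K p q x = (TensorProduct.lid K K).toLinearMap
      (TensorProduct.map p q (Coalgebra.comul x)) := rfl

/-- The coproduct on the dual of a finite-dimensional Hopf algebra, dual to multiplication. -/
def dcomul [FiniteDimensional K H] :
    Module.Dual K H →ₗ[K] Module.Dual K H ⊗[K] Module.Dual K H :=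
  (TensorProduct.dualDistribEquiv K H H).symm.toLinearMap ∘ₗ (LinearMap.mul' K H).dualMap

/-- The iterated comultiplication `h ↦ h₁ ⊗ (h₂ ⊗ h₃)`. -/
def comul2 : H →ₗ[K] H ⊗[K] (H ⊗[K] H) :=
  (LinearMap.lTensor H (Coalgebra.comul (R := K))) ∘ₗ Coalgebra.comul

/-- Lift a trilinear map to the triple tensor product `H ⊗ (H ⊗ H)`. -/
def lift3 {W : Type} [AddCommMonoid W] [Module K W]
    (Φ : H →ₗ[K] H →ₗ[K] H →ₗ[K] W) : H ⊗[K] (H ⊗[K] H) →ₗ[K] W :=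
  TensorProduct.lift ((TensorProduct.lift.equiv (RingHom.id K) H H W).toLinearMap ∘ₗ Φ)

variable {K}

/-- auxiliary linear map `h₃ ↦ F (p ∘ mulLeft (u h₃) ∘ mulRight (v h₁)) ⊗ g h₂`. -/
def inner3 (u : H →ₗ[K] H) (F : Module.Dual K H →ₗ[K] Module.Dual K H)
    (p : Module.Dual K H) (a g2 : H) : H →ₗ[K] Module.Dual K H ⊗[K] H :=
  ((TensorProduct.mk K (Module.Dual K H) H).flip g2) ∘ₗ F ∘ₗ
    (LinearMap.llcomp K H H K p) ∘ₗ
    ((LinearMap.llcomp K H H H).flip (LinearMap.mulRight K a)) ∘ₗ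
    ((LinearMap.mul K H) ∘ₗ u)

@[simp] lemma inner3_apply (u : H →ₗ[K] H) (F : Module.Dual K H →ₗ[K] Module.Dual K H)
    (p : Module.Dual K H) (a g2 h₃ : H) :
    inner3 u F p a g2 h₃
      = F (p ∘ₗ LinearMap.mulLeft K (u h₃) ∘ₗ LinearMap.mulRight K a) ⊗ₜ[K] g2 := by
  rfl

variable (K)

/-- The curried trilinear map
`(h₁, h₂, h₃) ↦ F (p ∘ mulLeft (u h₃) ∘ mulRight (v h₁)) ⊗ g h₂`. -/
def coreTri (u v : H →ₗ[K] H) (F : Module.Dual K H →ₗ[K] Module.Dual K H)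
    (g : H →ₗ[K] H) (p : Module.Dual K H) :
    H →ₗ[K] H →ₗ[K] H →ₗ[K] Module.Dual K H ⊗[K] H :=
  LinearMap.mk₂ K (fun h₁ h₂ => inner3 u F p (v h₁) (g h₂))
    (fun m m' n => by
      have hR : ∀ a b : H, LinearMap.mulRight K (a + b)
          = LinearMap.mulRight K a + LinearMap.mulRight K b := by
        intro a b; ext x; simp [mul_add]
      ext h₃
      simp [hR, LinearMap.comp_add, LinearMap.add_comp, map_add, add_tmul])
    (fun c m n => by
      have hR : ∀ a : H, LinearMap.mulRight K ((c : K) • a)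
          = c • LinearMap.mulRight K a := by
        intro a; ext x; simp [mul_smul_comm]
      ext h₃
      simp [hR, LinearMap.comp_smul, LinearMap.smul_comp, map_smul, smul_tmul'])
    (fun m n n' => by
      ext h₃
      simp [map_add, tmul_add])
    (fun c m n => by
      ext h₃
      simp [map_smul, tmul_smul])

/-- The diagonal crossed product of pure tensors:
`(p ⋈ h)(q ⋈ l) = Σ p (α(h₁) ▶ q ◀ S⁻¹β(h₃)) ⋈ h₂ l`. -/
def dprod (α β Sinv : H →ₗ[K] H) (p : Module.Dual K H) (h : H)
    (q : Module.Dual K H) (l : H) : Module.Dual K H ⊗[K] H :=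
  lift3 K (coreTri K (Sinv ∘ₗ β) α (convMul K p) (LinearMap.mulRight K l) q) (comul2 K h)

/-- The value of the antipode of the diagonal crossed product on a pure tensor. -/
def smapVal (α β Sinv : H →ₗ[K] H) (p : Module.Dual K H) (h : H) :
    Module.Dual K H ⊗[K] H :=
  lift3 K (coreTri K (Sinv ∘ₗ β ∘ₗ HopfAlgebra.antipode (R := K))
      (Sinv ∘ₗ α) Sinv.dualMap
      (α ∘ₗ β ∘ₗ HopfAlgebra.antipode (R := K)) p) (comul2 K h)

/-- Componentwise product on a tensor product of two (nonunital) algebras given by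
bilinear multiplications. -/
def tmul₂ {A B : Type} [AddCommMonoid A] [Module K A] [AddCommMonoid B] [Module K B]
    (M1 : A →ₗ[K] A →ₗ[K] A) (M2 : B →ₗ[K] B →ₗ[K] B) :
    A ⊗[K] B →ₗ[K] A ⊗[K] B →ₗ[K] A ⊗[K] B :=
  (TensorProduct.homTensorHomMap (RingHom.id K) A B A B) ∘ₗ (TensorProduct.map M1 M2)

/-- The comultiplication component `Δ_{(α,β),(γ,δ)}(p ⋈ h) = Σ (p₂ ⋈ c h₁) ⊗ (p₁ ⋈ e h₂)`
(with `c = γ`, `e = γ⁻¹βγ`). -/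
def deltaComp [FiniteDimensional K H] (c e : H →ₗ[K] H) :
    Module.Dual K H ⊗[K] H →ₗ[K]
      (Module.Dual K H ⊗[K] H) ⊗[K] (Module.Dual K H ⊗[K] H) :=
  (TensorProduct.tensorTensorTensorComm K (Module.Dual K H) (Module.Dual K H) H H).toLinearMap ∘ₗ
    TensorProduct.map
      ((TensorProduct.comm K (Module.Dual K H) (Module.Dual K H)).toLinearMap ∘ₗ dcomul K)
      (TensorProduct.map c e ∘ₗ Coalgebra.comul)

/-- The crossing map `ξ_(a,b)^(c,·)(p ⋈ h) = (p ∘ b a⁻¹) ⋈ a c⁻¹ b⁻¹ c (h)`. -/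
def xiMap (a b c : H ≃ₗ[K] H) :
    Module.Dual K H ⊗[K] H →ₗ[K] Module.Dual K H ⊗[K] H :=
  TensorProduct.map ((b.toLinearMap ∘ₗ a.symm.toLinearMap).dualMap)
    (a.toLinearMap ∘ₗ c.symm.toLinearMap ∘ₗ b.symm.toLinearMap ∘ₗ c.toLinearMap)

/-- Embedding of the dual into the crossed product, `p ↦ p ⋈ 1`. -/
def toD1 : Module.Dual K H →ₗ[K] Module.Dual K H ⊗[K] H :=
  (TensorProduct.mk K (Module.Dual K H) H).flip 1

/-- Embedding of `H` into the crossed product, `h ↦ ε ⋈ h`. -/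
def toD2 : H →ₗ[K] Module.Dual K H ⊗[K] H :=
  TensorProduct.mk K (Module.Dual K H) H (Coalgebra.counit (R := K))

end DCP


/-!
`S⁻¹` and all the automorphisms involved fix `1` and `ε`, and `Δ_{H*}(ε) = ε ⊗ ε`. Hence the left
side is `Σᵢ (ε ⋈ β⁻¹γδ⁻¹(eᵢ)₁) ⊗ (ε ⋈ δ⁻¹(eᵢ)₂) ⊗ (eⁱ ⋈ 1)`. On the right `ξ(eⁱ ⋈ 1) = eⁱ∘γδ⁻¹ ⋈ 1`,
multiplying by the unit `ε ⋈ 1` is trivial and `(p ⋈ 1)(q ⋈ 1) = pq ⋈ 1`, giving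
`Σᵢⱼ (ε ⋈ β⁻¹eᵢ) ⊗ (ε ⋈ δ⁻¹eⱼ) ⊗ ((eⁱ∘γδ⁻¹) eʲ ⋈ 1)`. The two agree because expanding
`F := (γδ⁻¹ ⊗ id) ∘ Δ : H → H ⊗ H` in the bases `{eᵢ}` and `{eᵢ ⊗ eⱼ}` gives
`Σₖ F(eₖ) ⊗ eᵏ = Σᵢⱼ (eᵢ ⊗ eⱼ) ⊗ ((eⁱ ⊗ eʲ) ∘ F)`, and `(eⁱ ⊗ eʲ) ∘ F = (eⁱ∘γδ⁻¹) eʲ` in `H*`.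
-/

open Coalgebra

namespace HopfAlgebra

variable {K H : Type} [Field K] [Ring H] [HopfAlgebra K H]

lemma counit_apply_of_antipode_comp_eq_id {T : H →ₗ[K] H}
    (hT : antipode K ∘ₗ T = LinearMap.id) (x : H) :
    counit (R := K) (T x) = counit x :=
  (counit_antipode (R := K) (T x)).symm.trans (congrArg counit congr($hT x))

lemma map_one_of_comp_antipode_eq_id {T : H →ₗ[K] H}
    (hT : T ∘ₗ antipode K = LinearMap.id) : T 1 = 1 := by
  simpa using congr($hT 1)

end HopfAlgebra

namespace Module.Basis

variable {K V W ι κ : Type} [Field K] [AddCommGroup V] [Module K V] [AddCommGroup W] [Module K W]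

lemma tensorProduct_coord (b : Basis ι K V) (c : Basis κ K W) (i : ι) (k : κ) :
    (b.tensorProduct c).coord (i, k)
      = (TensorProduct.lid K K).toLinearMap ∘ₗ TensorProduct.map (b.coord i) (c.coord k) := by
  refine TensorProduct.ext' fun x y => ?_
  simp [mul_comm]

lemma sum_apply_tmul_coord [Fintype ι] [Fintype κ] (b : Basis ι K V) (c : Basis κ K W)
    (F : V →ₗ[K] W) :
    ∑ i, F (b i) ⊗ₜ[K] b.coord i = ∑ k, c k ⊗ₜ[K] (c.coord k ∘ₗ F) := by
  conv_rhs => enter [2, k]; rw [← b.sum_dual_apply_smul_coord (c.coord k ∘ₗ F)]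
  simp only [tmul_sum, tmul_smul, smul_tmul']
  rw [Finset.sum_comm]
  refine Finset.sum_congr rfl fun i _ => ?_
  rw [← sum_tmul]
  congr 1
  simp [Basis.coord_apply]

end Module.Basis

namespace DCP

variable {K H : Type} [Field K] [Ring H] [HopfAlgebra K H]

namespace IsHopfAut

variable {f : H ≃ₗ[K] H}

lemma map_one (hf : IsHopfAut K f) : f 1 = 1 := hf.2.1

lemma comul_apply (hf : IsHopfAut K f) (x : H) :
    comul (R := K) (f x) = TensorProduct.map f.toLinearMap f.toLinearMap (comul x) :=
  congr($(hf.2.2.1) x)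

lemma counit_apply (hf : IsHopfAut K f) (x : H) : counit (R := K) (f x) = counit x :=
  congr($(hf.2.2.2) x)

lemma symm (hf : IsHopfAut K f) : IsHopfAut K f.symm := by
  refine ⟨fun x y => f.injective ?_, f.injective ?_, ?_, ?_⟩
  · simp [hf.1]
  · simp [hf.map_one]
  · ext x
    have h := hf.comul_apply (f.symm x)
    rw [f.apply_symm_apply] at h
    rw [LinearMap.comp_apply, LinearMap.comp_apply, h,
      ← LinearMap.comp_apply (TensorProduct.map _ _), ← TensorProduct.map_comp, f.symm_comp,
      TensorProduct.map_id, LinearMap.id_apply]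
    rfl
  · ext x
    conv_rhs => rw [← f.apply_symm_apply x]
    exact (hf.counit_apply _).symm

end IsHopfAut

lemma convMul_counit_left (q : Module.Dual K H) : convMul K counit q = q := by
  ext x
  rw [convMul_apply, ← LinearMap.lTensor_comp_rTensor, LinearMap.comp_apply,
    rTensor_counit_comul]
  simp

lemma sum_comul_tmul_coord {ι : Type} [Fintype ι] (b : Module.Basis ι K H) (g : H →ₗ[K] H) :
    ∑ i, TensorProduct.map g LinearMap.id (comul (R := K) (b i)) ⊗ₜ[K] b.coord i
      = ∑ i, ∑ j, (b i ⊗ₜ[K] b j) ⊗ₜ[K] convMul K (b.coord i ∘ₗ g) (b.coord j) := by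
  refine (b.sum_apply_tmul_coord (b.tensorProduct b)
    (TensorProduct.map g LinearMap.id ∘ₗ comul)).trans ?_
  rw [Fintype.sum_prod_type]
  refine Finset.sum_congr rfl fun i _ => Finset.sum_congr rfl fun j _ => ?_
  rw [Module.Basis.tensorProduct_apply, Module.Basis.tensorProduct_coord]
  congr 1
  ext x
  simp only [LinearMap.comp_apply, convMul_apply, TensorProduct.map_map, LinearMap.comp_id]

lemma counit_comp_mulLeft_comp_mulRight (a c : H) :
    (counit : Module.Dual K H) ∘ₗ LinearMap.mulLeft K a ∘ₗ LinearMap.mulRight K c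
      = (counit (R := K) a * counit (R := K) c) • (counit : Module.Dual K H) := by
  ext x
  simp only [LinearMap.comp_apply, LinearMap.mulLeft_apply, LinearMap.mulRight_apply,
    LinearMap.smul_apply, Bialgebra.counit_mul, smul_eq_mul]
  ring

lemma lift3_comul2_of_counit {W : Type} [AddCommMonoid W] [Module K W]
    (Φ : H →ₗ[K] H →ₗ[K] H →ₗ[K] W) (f : H →ₗ[K] W)
    (hΦ : ∀ x y z, Φ x y z = (counit (R := K) x * counit (R := K) z) • f y) (h : H) :
    lift3 K Φ (comul2 K h) = f h := by
  have hlift : lift3 K Φ = f ∘ₗ (TensorProduct.lid K H).toLinearMap ∘ₗ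
      LinearMap.rTensor H counit ∘ₗ
      LinearMap.lTensor H ((TensorProduct.rid K H).toLinearMap ∘ₗ LinearMap.lTensor H counit) := by
    refine TensorProduct.ext' fun x t => ?_
    induction t using TensorProduct.induction_on with
    | zero => simp
    | tmul y z => simp [lift3, hΦ, mul_smul]; exact smul_comm _ _ _
    | add s t hs ht => simp only [tmul_add, map_add, hs, ht]
  have hright : ((TensorProduct.rid K H).toLinearMap ∘ₗ LinearMap.lTensor H counit) ∘ₗ comul
      = LinearMap.id := by
    ext a; simp
  rw [hlift, comul2]
  simp only [LinearMap.comp_apply, ← LinearMap.lTensor_comp_apply, hright, LinearMap.lTensor_id,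
    LinearMap.id_apply, rTensor_counit_comul]
  simp

lemma dprod_counit_counit_one {α β Sinv : H →ₗ[K] H}
    (hα : ∀ x, counit (R := K) (α x) = counit x)
    (hβ : ∀ x, counit (R := K) (Sinv (β x)) = counit x) (h : H) :
    dprod K α β Sinv counit h counit 1 = (counit : Module.Dual K H) ⊗ₜ[K] h := by
  refine lift3_comul2_of_counit _ (TensorProduct.mk K (Module.Dual K H) H counit)
    (fun x y z => ?_) h
  simp only [coreTri, LinearMap.mk₂_apply, inner3_apply, LinearMap.comp_apply,
    counit_comp_mulLeft_comp_mulRight, map_smul, convMul_counit_left, hα, hβ,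
    LinearMap.mulRight_apply, mul_one, TensorProduct.mk_apply, smul_tmul', mul_comm]

lemma dprod_one {α β Sinv : H →ₗ[K] H} (hα : α 1 = 1) (hβ : Sinv (β 1) = 1)
    (p q : Module.Dual K H) (l : H) :
    dprod K α β Sinv p 1 q l = convMul K p q ⊗ₜ[K] l := by
  have hcomul2 : comul2 K (1 : H) = (1 : H) ⊗ₜ[K] ((1 : H) ⊗ₜ[K] (1 : H)) := by
    simp [comul2, Bialgebra.comul_one, Algebra.TensorProduct.one_def]
  simp [dprod, hcomul2, lift3, coreTri, LinearMap.comp_apply, hα, hβ, LinearMap.mulLeft_one,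
    LinearMap.mulRight_one]

lemma tmul₂_tmul {A B : Type} [AddCommMonoid A] [Module K A] [AddCommMonoid B] [Module K B]
    (M₁ : A →ₗ[K] A →ₗ[K] A) (M₂ : B →ₗ[K] B →ₗ[K] B) (a a' : A) (x x' : B) :
    tmul₂ K M₁ M₂ (a ⊗ₜ[K] x) (a' ⊗ₜ[K] x') = M₁ a a' ⊗ₜ[K] M₂ x x' := by
  simp [tmul₂]

lemma xiMap_tmul_one {a b c : H ≃ₗ[K] H} (ha : a 1 = 1) (hb : b 1 = 1) (hc : c 1 = 1)
    (p : Module.Dual K H) :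
    xiMap K a b c (p ⊗ₜ[K] 1) = (p ∘ₗ b.toLinearMap ∘ₗ a.symm.toLinearMap) ⊗ₜ[K] 1 := by
  have hsymm : ∀ f : H ≃ₗ[K] H, f 1 = 1 → f.symm 1 = 1 := fun f hf => f.symm_apply_eq.mpr hf.symm
  simp [xiMap, hc, hsymm b hb, hsymm c hc, ha]
  rfl

lemma dcomul_counit [FiniteDimensional K H] :
    dcomul K (counit : Module.Dual K H) = (counit : Module.Dual K H) ⊗ₜ[K] counit := by
  rw [dcomul, LinearMap.comp_apply, LinearEquiv.coe_coe, LinearEquiv.symm_apply_eq]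
  refine TensorProduct.ext' fun x y => ?_
  simp [TensorProduct.dualDistribEquiv, TensorProduct.dualDistribEquivOfBasis,
    TensorProduct.dualDistrib_apply]

lemma deltaComp_counit_tmul [FiniteDimensional K H] (c e : H →ₗ[K] H) (h : H) :
    deltaComp K c e ((counit : Module.Dual K H) ⊗ₜ[K] h)
      = TensorProduct.map (TensorProduct.mk K (Module.Dual K H) H counit ∘ₗ c)
          (TensorProduct.mk K (Module.Dual K H) H counit ∘ₗ e) (comul (R := K) h) := by
  simp only [deltaComp, LinearMap.comp_apply, LinearEquiv.coe_coe, TensorProduct.map_tmul,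
    dcomul_counit, TensorProduct.comm_tmul]
  induction comul (R := K) h using TensorProduct.induction_on with
  | zero => simp
  | tmul x y => simp
  | add s t hs ht => simp only [tmul_add, map_add, hs, ht]

lemma deltaComp_counit_tmul_of_isHopfAut [FiniteDimensional K H] {β γ δ : H ≃ₗ[K] H}
    (hβ : IsHopfAut K β) (hγ : IsHopfAut K γ) (hδ : IsHopfAut K δ) (x : H) :
    deltaComp K γ.toLinearMap (γ.symm.toLinearMap ∘ₗ β.toLinearMap ∘ₗ γ.toLinearMap)
        ((counit : Module.Dual K H) ⊗ₜ[K] γ.symm (β.symm (γ (δ.symm x))))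
      = TensorProduct.map
          (TensorProduct.mk K (Module.Dual K H) H counit ∘ₗ β.symm.toLinearMap ∘ₗ
            γ.toLinearMap ∘ₗ δ.symm.toLinearMap)
          (TensorProduct.mk K (Module.Dual K H) H counit ∘ₗ δ.symm.toLinearMap)
          (comul (R := K) x) := by
  rw [deltaComp_counit_tmul, hγ.symm.comul_apply, hβ.symm.comul_apply, hγ.comul_apply,
    hδ.symm.comul_apply]
  simp only [TensorProduct.map_map]
  congr 2 <;> ext <;> simp

end DCP

open DCP in
theorem stmt16_general (K H : Type) [Field K] [Ring H] [HopfAlgebra K H] [FiniteDimensional K H]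
    (Sinv : H →ₗ[K] H)
    (hS1 : Sinv ∘ₗ HopfAlgebra.antipode (R := K) (A := H) = LinearMap.id)
    (hS2 : HopfAlgebra.antipode (R := K) (A := H) ∘ₗ Sinv = LinearMap.id)
    (α β γ δ μ ν : H ≃ₗ[K] H)
    (hα : DCP.IsHopfAut K α)
    (hβ : DCP.IsHopfAut K β)
    (hγ : DCP.IsHopfAut K γ)
    (hδ : DCP.IsHopfAut K δ)
    (hμ : DCP.IsHopfAut K μ)
    (hν : DCP.IsHopfAut K ν)
    (Ma : Module.Dual K H ⊗[K] H →ₗ[K] Module.Dual K H ⊗[K] H →ₗ[K] Module.Dual K H ⊗[K] H)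
    (hMa : ∀ (p : Module.Dual K H) (h : H) (q : Module.Dual K H) (l : H),
      Ma (p ⊗ₜ[K] h) (q ⊗ₜ[K] l) = DCP.dprod K (α.toLinearMap) (β.toLinearMap) Sinv p h q l)
    (Mc : Module.Dual K H ⊗[K] H →ₗ[K] Module.Dual K H ⊗[K] H →ₗ[K] Module.Dual K H ⊗[K] H)
    (hMc : ∀ (p : Module.Dual K H) (h : H) (q : Module.Dual K H) (l : H),
      Mc (p ⊗ₜ[K] h) (q ⊗ₜ[K] l) = DCP.dprod K (γ.toLinearMap) (δ.toLinearMap) Sinv p h q l)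
    (Mm : Module.Dual K H ⊗[K] H →ₗ[K] Module.Dual K H ⊗[K] H →ₗ[K] Module.Dual K H ⊗[K] H)
    (hMm : ∀ (p : Module.Dual K H) (h : H) (q : Module.Dual K H) (l : H),
      Mm (p ⊗ₜ[K] h) (q ⊗ₜ[K] l) = DCP.dprod K (μ.toLinearMap) (ν.toLinearMap) Sinv p h q l)
    (ι : Type) [Fintype ι] (b : Module.Basis ι K H) :
    LinearMap.rTensor (Module.Dual K H ⊗[K] H)
        (DCP.deltaComp K γ.toLinearMap
          (γ.symm.toLinearMap ∘ₗ β.toLinearMap ∘ₗ γ.toLinearMap))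
        (∑ i, ((Coalgebra.counit : Module.Dual K H) ⊗ₜ[K]
            ((γ.symm.toLinearMap ∘ₗ β.symm.toLinearMap ∘ₗ γ.toLinearMap ∘ₗ
              δ.symm.toLinearMap) (b i))) ⊗ₜ[K] (b.coord i ⊗ₜ[K] (1 : H)))
    = DCP.tmul₂ K (DCP.tmul₂ K Ma Mc) Mm
        (TensorProduct.map
          ((TensorProduct.mk K (Module.Dual K H ⊗[K] H) (Module.Dual K H ⊗[K] H)).flip
            ((Coalgebra.counit : Module.Dual K H) ⊗ₜ[K] (1 : H)))
          LinearMap.id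
          (TensorProduct.map LinearMap.id
            (DCP.xiMap K γ.symm (γ.symm.trans (δ.symm.trans γ)) (γ.symm.trans (μ.trans γ)))
            (∑ i, ((Coalgebra.counit : Module.Dual K H) ⊗ₜ[K] β.symm (b i)) ⊗ₜ[K]
              (b.coord i ⊗ₜ[K] (1 : H)))))
        (∑ j, (((Coalgebra.counit : Module.Dual K H) ⊗ₜ[K] (1 : H)) ⊗ₜ[K]
            ((Coalgebra.counit : Module.Dual K H) ⊗ₜ[K] δ.symm (b j))) ⊗ₜ[K]
          (b.coord j ⊗ₜ[K] (1 : H))) := by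
  have hSinv : Sinv 1 = 1 := HopfAlgebra.map_one_of_comp_antipode_eq_id hS1
  have hMa' : ∀ h, Ma ((counit : Module.Dual K H) ⊗ₜ[K] h) (counit ⊗ₜ[K] 1) = counit ⊗ₜ[K] h :=
    fun h => by
      rw [hMa, dprod_counit_counit_one hα.counit_apply fun x =>
        (HopfAlgebra.counit_apply_of_antipode_comp_eq_id hS2 _).trans (hβ.counit_apply x)]
  have hMc' : ∀ h, Mc ((counit : Module.Dual K H) ⊗ₜ[K] 1) (counit ⊗ₜ[K] h) = counit ⊗ₜ[K] h :=
    fun h => by rw [hMc, dprod_one hγ.map_one (by simp [hδ.map_one, hSinv]), convMul_counit_left]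
  have hMm' : ∀ p q, Mm (p ⊗ₜ[K] 1) (q ⊗ₜ[K] 1) = convMul K p q ⊗ₜ[K] 1 :=
    fun p q => by rw [hMm, dprod_one hμ.map_one (by simp [hν.map_one, hSinv])]
  let g := γ.toLinearMap ∘ₗ δ.symm.toLinearMap
  have hxi : ∀ p, xiMap K γ.symm (γ.symm.trans (δ.symm.trans γ)) (γ.symm.trans (μ.trans γ))
      (p ⊗ₜ[K] 1) = (p ∘ₗ g) ⊗ₜ[K] 1 := fun p => by
    rw [xiMap_tmul_one hγ.symm.map_one (by simp [hγ.map_one, hδ.symm.map_one, hγ.symm.map_one])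
      (by simp [hγ.map_one, hμ.map_one, hγ.symm.map_one])]
    congr 1
    ext
    simp [g]
  let Φ := TensorProduct.map
    (TensorProduct.map (TensorProduct.mk K (Module.Dual K H) H counit ∘ₗ β.symm.toLinearMap)
      (TensorProduct.mk K (Module.Dual K H) H counit ∘ₗ δ.symm.toLinearMap))
    ((TensorProduct.mk K (Module.Dual K H) H).flip (1 : H))
  calc _ = Φ (∑ i, TensorProduct.map g LinearMap.id (comul (R := K) (b i)) ⊗ₜ[K] b.coord i) := by
        simp only [map_sum, LinearMap.rTensor_tmul, LinearMap.comp_apply, LinearEquiv.coe_coe,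
          deltaComp_counit_tmul_of_isHopfAut hβ hγ hδ, Φ, TensorProduct.map_tmul,
          TensorProduct.map_map]
        rfl
    _ = Φ (∑ i, ∑ j, (b i ⊗ₜ[K] b j) ⊗ₜ[K] convMul K (b.coord i ∘ₗ g) (b.coord j)) := by
        rw [sum_comul_tmul_coord]
    _ = _ := by
        simp only [map_sum, LinearMap.sum_apply, TensorProduct.map_tmul, hxi, LinearMap.flip_apply,
          TensorProduct.mk_apply, LinearMap.id_apply, tmul₂_tmul, hMa', hMc', hMm', Φ,
          LinearMap.comp_apply]
        exact Finset.sum_comm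

/-- `(Δ_{(α,β),(γ,δ)} ⊗ id)(R_{(α,β)*(γ,δ),(μ,ν)})
  = ((id ⊗ ξ_{(γ,δ)⁻¹})(R_{(α,β),(γ,δ)*(μ,ν)*(γ,δ)⁻¹}))₁₃ (R_{(γ,δ),(μ,ν)})₂₃`. -/
theorem stmt16 (K H : Type) [Field K] [Ring H] [HopfAlgebra K H] [FiniteDimensional K H]
    (Sinv : H →ₗ[K] H)
    (hS1 : Sinv ∘ₗ HopfAlgebra.antipode (R := K) (A := H) = LinearMap.id)
    (hS2 : HopfAlgebra.antipode (R := K) (A := H) ∘ₗ Sinv = LinearMap.id)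
    (α β γ δ μ ν : H ≃ₗ[K] H)
    (hα : DCP.IsHopfAut K α)
    (hβ : DCP.IsHopfAut K β)
    (hγ : DCP.IsHopfAut K γ)
    (hδ : DCP.IsHopfAut K δ)
    (hμ : DCP.IsHopfAut K μ)
    (hν : DCP.IsHopfAut K ν)
    (Ma : Module.Dual K H ⊗[K] H →ₗ[K] Module.Dual K H ⊗[K] H →ₗ[K] Module.Dual K H ⊗[K] H)
    (hMa : ∀ (p : Module.Dual K H) (h : H) (q : Module.Dual K H) (l : H),
      Ma (p ⊗ₜ[K] h) (q ⊗ₜ[K] l) = DCP.dprod K (α.toLinearMap) (β.toLinearMap) Sinv p h q l)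
    (Mc : Module.Dual K H ⊗[K] H →ₗ[K] Module.Dual K H ⊗[K] H →ₗ[K] Module.Dual K H ⊗[K] H)
    (hMc : ∀ (p : Module.Dual K H) (h : H) (q : Module.Dual K H) (l : H),
      Mc (p ⊗ₜ[K] h) (q ⊗ₜ[K] l) = DCP.dprod K (γ.toLinearMap) (δ.toLinearMap) Sinv p h q l)
    (Mm : Module.Dual K H ⊗[K] H →ₗ[K] Module.Dual K H ⊗[K] H →ₗ[K] Module.Dual K H ⊗[K] H)
    (hMm : ∀ (p : Module.Dual K H) (h : H) (q : Module.Dual K H) (l : H),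
      Mm (p ⊗ₜ[K] h) (q ⊗ₜ[K] l) = DCP.dprod K (μ.toLinearMap) (ν.toLinearMap) Sinv p h q l)
    (ι : Type) [Fintype ι] [DecidableEq ι] (b : Module.Basis ι K H) :
    LinearMap.rTensor (Module.Dual K H ⊗[K] H)
        (DCP.deltaComp K γ.toLinearMap
          (γ.symm.toLinearMap ∘ₗ β.toLinearMap ∘ₗ γ.toLinearMap))
        (∑ i, ((Coalgebra.counit : Module.Dual K H) ⊗ₜ[K]
            ((γ.symm.toLinearMap ∘ₗ β.symm.toLinearMap ∘ₗ γ.toLinearMap ∘ₗ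
              δ.symm.toLinearMap) (b i))) ⊗ₜ[K] (b.coord i ⊗ₜ[K] (1 : H)))
    = DCP.tmul₂ K (DCP.tmul₂ K Ma Mc) Mm
        (TensorProduct.map
          ((TensorProduct.mk K (Module.Dual K H ⊗[K] H) (Module.Dual K H ⊗[K] H)).flip
            ((Coalgebra.counit : Module.Dual K H) ⊗ₜ[K] (1 : H)))
          LinearMap.id
          (TensorProduct.map LinearMap.id
            (DCP.xiMap K γ.symm (γ.symm.trans (δ.symm.trans γ)) (γ.symm.trans (μ.trans γ)))
            (∑ i, ((Coalgebra.counit : Module.Dual K H) ⊗ₜ[K] β.symm (b i)) ⊗ₜ[K]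
              (b.coord i ⊗ₜ[K] (1 : H)))))
        (∑ j, (((Coalgebra.counit : Module.Dual K H) ⊗ₜ[K] (1 : H)) ⊗ₜ[K]
            ((Coalgebra.counit : Module.Dual K H) ⊗ₜ[K] δ.symm (b j))) ⊗ₜ[K]
          (b.coord j ⊗ₜ[K] (1 : H))) :=
  stmt16_general K H Sinv hS1 hS2 α β γ δ μ ν hα hβ hγ hδ hμ hν Ma hMa Mc hMc Mm hMm ι b
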